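/- Equivalence of competitive equilibria and efficient allocations with market-clearing prices: under the market-model assumptions (each W_i differentiable and concave, each K_i nonempty and compact, C_0 differentiable and convex), a tuple ((x_i)_i, q^S, p) with x_i ∈ K_i for all i is a competitive equilibrium (i.e., each x_i maximizes x ↦ W_i(x) − ⟨p, S_i x⟩ over K_i, q^S maximizes q ↦ ⟨p, q⟩ − C_0(q) over ℝ^H, and q^S = Σ_i S_i x_i) if and only if (x_1,…,x_N) maximizes the social welfare (x_1,…,x_N) ↦ Σ_i W_i(x_i) − C_0(Σ_i S_i x_i) over K_1 × ⋯ × K_N, q^S = Σ_i S_i x_i, and p = ∇C_0(q^S). -/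

import Mathlib

open scoped RealInnerProductSpace

/-- The aggregation map `S_i`: sums the appliance blocks of a prosumer's consumption
vector, `S_i x = ∑_a x_{·,a}`, giving a vector of per-period totals. -/
noncomputable def aggr {a h' : Type*} [Fintype a] [Fintype h']
    (x : EuclideanSpace ℝ (a × h')) : EuclideanSpace ℝ h' :=
  WithLp.toLp 2 (fun t => ∑ i : a, x (i, t))

/-- The polyhedral constraint set `K = {x : A x ≤ h}` (componentwise inequalities). -/
def Kset {m' n' : Type*} [Fintype m'] [Fintype n'] (A : Matrix m' n' ℝ) (h : m' → ℝ) :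
    Set (EuclideanSpace ℝ n') := {x | ∀ l, ∑ j, A l j * x j ≤ h l}

/-! A competitive equilibrium is efficient by summing the prosumers' and the utility's
optimality conditions, and the utility's unconstrained first-order condition forces
`p = ∇C0(q^S)`. Conversely, an efficient `x` has each `x i` maximizing welfare with the
other prosumers fixed; at first order the cost term then contributes exactly
`⟪∇C0(q^S), S_i ·⟫ = ⟪p, S_i ·⟫`, and concavity of `W i` turns this first-order condition
into global maximality of the payoff, while convexity of `C0` (tangent inequality) gives profit
maximality. -/

open Set Filter

section FirstOrder

variable {E : Type*} [NormedAddCommGroup E] [NormedSpace ℝ E]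

/- Along the segment from `x` to `y`, concavity bounds the increment of `f` from below by
`t (f y - f x)`, maximality bounds it from above by the increment of `g`, and the latter is
`t g' (y - x) + o(t)`. -/
theorem ConcaveOn.sub_le_fderiv_of_isMaxOn_sub {f g : E → ℝ} {g' : E →L[ℝ] ℝ} {K : Set E}
    {x y : E} (hf : ConcaveOn ℝ K f) (hx : x ∈ K) (hy : y ∈ K) (hg : HasFDerivAt g g' x)
    (hmax : IsMaxOn (fun z => f z - g z) K x) : f y - f x ≤ g' (y - x) := by
  refine ge_of_tendsto (hg.hasLineDerivAt (y - x)).tendsto_slope_zero_right ?_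
  filter_upwards [Ioc_mem_nhdsGT zero_lt_one] with t ⟨ht0, ht1⟩
  have hseg : x + t • (y - x) = (1 - t) • x + t • y := by
    rw [smul_sub, sub_smul, one_smul]; abel
  have hconc : (1 - t) * f x + t * f y ≤ f (x + t • (y - x)) := by
    rw [hseg]; exact hf.2 hx hy (by linarith) ht0.le (by ring)
  have hopt : f (x + t • (y - x)) - g (x + t • (y - x)) ≤ f x - g x :=
    hmax (hf.1.add_smul_sub_mem hx hy ⟨ht0.le, ht1⟩)
  rw [smul_eq_mul, le_inv_mul_iff₀ ht0]
  linarith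

theorem ConvexOn.add_fderiv_sub_le {f : E → ℝ} {f' : E →L[ℝ] ℝ} {K : Set E} {x y : E}
    (hf : ConvexOn ℝ K f) (hx : x ∈ K) (hy : y ∈ K) (hd : HasFDerivAt f f' x) :
    f x + f' (y - x) ≤ f y := by
  have := hf.neg.sub_le_fderiv_of_isMaxOn_sub hx hy hd.neg (g := -f)
    (isMaxOn_iff.2 fun z _ => by simp)
  simp only [Pi.neg_apply, neg_apply] at this
  linarith

end FirstOrder

theorem ConvexOn.forall_inner_sub_le_iff_eq_gradient {F : Type*} [NormedAddCommGroup F]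
    [InnerProductSpace ℝ F] [CompleteSpace F] {C : F → ℝ} {p q : F}
    (hC : ConvexOn ℝ univ C) (hd : DifferentiableAt ℝ C q) :
    (∀ z, ⟪p, z⟫ - C z ≤ ⟪p, q⟫ - C q) ↔ p = gradient C q := by
  have hC' := hd.hasGradientAt.hasFDerivAt
  constructor
  · intro hmax
    have hzero := IsLocalMax.hasFDerivAt_eq_zero (Eventually.of_forall hmax)
      ((InnerProductSpace.toDual ℝ F p).hasFDerivAt.sub hC')
    exact (InnerProductSpace.toDual ℝ F).injective (sub_eq_zero.1 hzero)
  · rintro rfl z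
    have := hC.add_fderiv_sub_le (mem_univ q) (mem_univ z) hC'
    rw [InnerProductSpace.toDual_apply_apply, inner_sub_right] at this
    linarith

theorem Finset.sum_apply_update {ι M : Type*} [Fintype ι] [DecidableEq ι] [AddCommGroup M]
    {β : ι → Type*} (f : ∀ i, β i → M) (x : ∀ i, β i) (i : ι) (z : β i) :
    ∑ j, f j (Function.update x i z j) = ∑ j, f j (x j) + (f i z - f i (x i)) := by
  simp_rw [Function.apply_update f x i z]
  rw [Finset.sum_update_of_mem (mem_univ i),
    Finset.sum_eq_add_sum_sdiff_singleton_of_mem (mem_univ i)]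
  abel

theorem convex_Kset {m' n' : Type*} [Fintype m'] [Fintype n'] (A : Matrix m' n' ℝ)
    (h : m' → ℝ) : Convex ℝ (Kset A h) := by
  simp only [Kset, ofPred_forall]
  refine convex_iInter fun l => convex_halfSpace_le ⟨fun u v => ?_, fun c u => ?_⟩ (h l)
  · simp [mul_add, Finset.sum_add_distrib]
  · simp [Finset.mul_sum, mul_left_comm]

noncomputable def aggrCLM (a h' : Type*) [Fintype a] [Fintype h'] :
    EuclideanSpace ℝ (a × h') →L[ℝ] EuclideanSpace ℝ h' :=
  LinearMap.toContinuousLinearMap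
    { toFun := aggr
      map_add' := fun u v => by ext t; simp [aggr, Finset.sum_add_distrib]
      map_smul' := fun c u => by ext t; simp [aggr, Finset.mul_sum] }

section Market

variable {ι : Type*} [Fintype ι] {E : ι → Type*} {F : Type*} [NormedAddCommGroup F]
  [InnerProductSpace ℝ F] {K : ∀ i, Set (E i)} {W : ∀ i, E i → ℝ} {C : F → ℝ} {p : F}
  {x : ∀ i, E i}

theorem welfare_le_of_competitive (S : ∀ i, E i → F)
    (hpay : ∀ i, ∀ y ∈ K i, W i y - ⟪p, S i y⟫ ≤ W i (x i) - ⟪p, S i (x i)⟫)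
    (hprof : ∀ q, ⟪p, q⟫ - C q ≤ ⟪p, ∑ i, S i (x i)⟫ - C (∑ i, S i (x i)))
    (y : ∀ i, E i) (hy : ∀ i, y i ∈ K i) :
    ∑ i, W i (y i) - C (∑ i, S i (y i)) ≤ ∑ i, W i (x i) - C (∑ i, S i (x i)) := by
  have hsum := Finset.sum_le_sum fun i (_ : i ∈ Finset.univ) => hpay i (y i) (hy i)
  have hq := hprof (∑ i, S i (y i))
  simp only [Finset.sum_sub_distrib, ← inner_sum] at hsum
  linarith

theorem payoff_le_of_welfare_le [∀ i, NormedAddCommGroup (E i)] [∀ i, NormedSpace ℝ (E i)]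
    [CompleteSpace F] (S : ∀ i, E i →L[ℝ] F) (hW : ∀ i, ConcaveOn ℝ (K i) (W i))
    (hC : HasGradientAt C p (∑ i, S i (x i))) (hx : ∀ i, x i ∈ K i)
    (hwel : ∀ y : ∀ i, E i, (∀ i, y i ∈ K i) →
      ∑ i, W i (y i) - C (∑ i, S i (y i)) ≤ ∑ i, W i (x i) - C (∑ i, S i (x i)))
    (i : ι) (y : E i) (hy : y ∈ K i) :
    W i y - ⟪p, S i y⟫ ≤ W i (x i) - ⟪p, S i (x i)⟫ := by
  classical
  set q := ∑ j, S j (x j)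
  have hmax : IsMaxOn (fun z => W i z - C (q + S i (z - x i))) (K i) (x i) := by
    refine isMaxOn_iff.2 fun z hz => ?_
    have hupd : ∀ j, Function.update x i z j ∈ K j := fun j =>
      (update_mem_pi_iff_of_mem (s := univ) fun j _ => hx j).2 (fun _ => hz) j trivial
    have := hwel _ hupd
    rw [Finset.sum_apply_update W, Finset.sum_apply_update (fun j => S j), ← map_sub] at this
    simp only [sub_self, map_zero, add_zero]
    linarith
  have hg : HasFDerivAt (fun z => C (q + S i (z - x i)))
      ((InnerProductSpace.toDual ℝ F p).comp (S i)) (x i) := by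
    have hC' : HasFDerivAt C (InnerProductSpace.toDual ℝ F p) (q + S i (x i - x i)) := by
      rw [sub_self, map_zero, add_zero]; exact hC.hasFDerivAt
    exact hC'.comp (x i)
      (((S i).hasFDerivAt.comp (x i) ((hasFDerivAt_id _).sub_const _)).const_add q)
  have := (hW i).sub_le_fderiv_of_isMaxOn_sub (hx i) hy hg hmax
  rw [ContinuousLinearMap.comp_apply, InnerProductSpace.toDual_apply_apply, map_sub,
    inner_sub_right] at this
  linarith

end Market

theorem competitive_equilibrium_iff_efficient_general
    (N H : ℕ) (nA : Fin N → ℕ) (m : Fin N → ℕ)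
    (A : ∀ i, Matrix (Fin (m i)) (Fin (nA i) × Fin H) ℝ)
    (h : ∀ i, Fin (m i) → ℝ)
    (W : ∀ i, EuclideanSpace ℝ (Fin (nA i) × Fin H) → ℝ)
    (C0 : EuclideanSpace ℝ (Fin H) → ℝ)
    (hWconc : ∀ i, ConcaveOn ℝ Set.univ (W i))
    (hC0diff : Differentiable ℝ C0)
    (hC0conv : ConvexOn ℝ Set.univ C0)
    (x : ∀ i, EuclideanSpace ℝ (Fin (nA i) × Fin H))
    (qS p : EuclideanSpace ℝ (Fin H))
    (hx : ∀ i, x i ∈ Kset (A i) (h i)) :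
    ((∀ i, ∀ y ∈ Kset (A i) (h i),
        W i y - ⟪p, aggr y⟫ ≤ W i (x i) - ⟪p, aggr (x i)⟫) ∧
      (∀ q : EuclideanSpace ℝ (Fin H), ⟪p, q⟫ - C0 q ≤ ⟪p, qS⟫ - C0 qS) ∧
      qS = ∑ i, aggr (x i)) ↔
    ((∀ y : ∀ i, EuclideanSpace ℝ (Fin (nA i) × Fin H),
        (∀ i, y i ∈ Kset (A i) (h i)) →
        ∑ i, W i (y i) - C0 (∑ i, aggr (y i)) ≤
          ∑ i, W i (x i) - C0 (∑ i, aggr (x i))) ∧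
      qS = ∑ i, aggr (x i) ∧
      p = gradient C0 qS) := by
  have hprofit := hC0conv.forall_inner_sub_le_iff_eq_gradient (p := p) (hC0diff qS)
  constructor
  · rintro ⟨hpay, hprof, rfl⟩
    exact ⟨welfare_le_of_competitive (fun _ => aggr) hpay hprof, rfl, hprofit.1 hprof⟩
  · rintro ⟨hwel, rfl, hp⟩
    have hW : ∀ i, ConcaveOn ℝ (Kset (A i) (h i)) (W i) := fun i =>
      (hWconc i).subset (subset_univ _) (convex_Kset _ _)
    have hC : HasGradientAt C0 p (∑ i, aggrCLM (Fin (nA i)) (Fin H) (x i)) := by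
      rw [hp]; exact (hC0diff _).hasGradientAt
    exact ⟨payoff_le_of_welfare_le (fun i => aggrCLM (Fin (nA i)) (Fin H)) hW hC hx hwel,
      hprofit.2 hp, rfl⟩

/-- Equivalence of competitive equilibria and efficient allocations with market-clearing
prices: under the market-model assumptions (each `W i` differentiable and concave, each
polyhedral `K_i = {x : A_i x ≤ h_i}` nonempty and compact, `C0` differentiable and
convex), a tuple `((x i)_i, q^S, p)` with `x i ∈ K_i` is a competitive equilibrium (each
`x i` maximizes the payoff `y ↦ W_i(y) − ⟨p, S_i y⟩` over `K_i`, `q^S` maximizes the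
profit `q ↦ ⟨p, q⟩ − C0(q)` over `ℝ^H`, and `q^S = ∑ i, S_i x_i`) if and only if
`(x i)_i` maximizes the social welfare `y ↦ ∑ i W_i(y_i) − C0(∑ i S_i y_i)` over
`Π i, K_i`, `q^S = ∑ i, S_i x_i`, and `p = ∇C0(q^S)`. -/
theorem competitive_equilibrium_iff_efficient
    (N H : ℕ) (nA : Fin N → ℕ) (m : Fin N → ℕ)
    (A : ∀ i, Matrix (Fin (m i)) (Fin (nA i) × Fin H) ℝ)
    (h : ∀ i, Fin (m i) → ℝ)
    (W : ∀ i, EuclideanSpace ℝ (Fin (nA i) × Fin H) → ℝ)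
    (C0 : EuclideanSpace ℝ (Fin H) → ℝ)
    (hWdiff : ∀ i, Differentiable ℝ (W i))
    (hWconc : ∀ i, ConcaveOn ℝ Set.univ (W i))
    (hKne : ∀ i, (Kset (A i) (h i)).Nonempty)
    (hKcpt : ∀ i, IsCompact (Kset (A i) (h i)))
    (hC0diff : Differentiable ℝ C0)
    (hC0conv : ConvexOn ℝ Set.univ C0)
    (x : ∀ i, EuclideanSpace ℝ (Fin (nA i) × Fin H))
    (qS p : EuclideanSpace ℝ (Fin H))
    (hx : ∀ i, x i ∈ Kset (A i) (h i)) :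
    ((∀ i, ∀ y ∈ Kset (A i) (h i),
        W i y - ⟪p, aggr y⟫ ≤ W i (x i) - ⟪p, aggr (x i)⟫) ∧
      (∀ q : EuclideanSpace ℝ (Fin H), ⟪p, q⟫ - C0 q ≤ ⟪p, qS⟫ - C0 qS) ∧
      qS = ∑ i, aggr (x i)) ↔
    ((∀ y : ∀ i, EuclideanSpace ℝ (Fin (nA i) × Fin H),
        (∀ i, y i ∈ Kset (A i) (h i)) →
        ∑ i, W i (y i) - C0 (∑ i, aggr (y i)) ≤
          ∑ i, W i (x i) - C0 (∑ i, aggr (x i))) ∧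
      qS = ∑ i, aggr (x i) ∧
      p = gradient C0 qS) :=
  competitive_equilibrium_iff_efficient_general N H nA m A h W C0 hWconc hC0diff hC0conv x qS p hx
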